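/- arXiv:2011.08058 — 2 statements merged into one kernel-verified Lean document; each statement's English description precedes it below -/
import Mathlib

section
/- Orthogonality claim in the proof of Corollary 2.3: let f : ℝ^d → ℝ be smooth with compact support and set p := π·e^f (so f = log(p/π)). Then ∫_{ℝ^d} ⟨∇f(x), γ(x)⟩ p(x) dx = 0. -/
open MeasureTheory
open scoped BigOperators

noncomputable section

/-- `i`-th partial derivative of `f` at `x`, in the coordinate direction `i`. -/
def pderiv' {d : ℕ} (f : EuclideanSpace ℝ (Fin d) → ℝ) (i : Fin d)
    (x : EuclideanSpace ℝ (Fin d)) : ℝ :=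
  fderiv ℝ f x (EuclideanSpace.single i 1)

/-- second partial derivative `∂_i ∂_j f` at `x`. -/
def pderiv2 {d : ℕ} (f : EuclideanSpace ℝ (Fin d) → ℝ) (i j : Fin d)
    (x : EuclideanSpace ℝ (Fin d)) : ℝ :=
  pderiv' (fun y => pderiv' f j y) i x

/-- Laplacian `Δf`. -/
def lap {d : ℕ} (f : EuclideanSpace ℝ (Fin d) → ℝ) (x : EuclideanSpace ℝ (Fin d)) : ℝ :=
  ∑ i, pderiv2 f i i x

/-- carré du champ `Γ₁(g,h) = ⟨∇g, ∇h⟩`. -/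
def Gamma1 {d : ℕ} (g h : EuclideanSpace ℝ (Fin d) → ℝ) (x : EuclideanSpace ℝ (Fin d)) : ℝ :=
  ∑ i, pderiv' g i x * pderiv' h i x

/-- generator `L̃ h = ⟨∇ log π, ∇h⟩ + Δh`. -/
def genL {d : ℕ} (π h : EuclideanSpace ℝ (Fin d) → ℝ) (x : EuclideanSpace ℝ (Fin d)) : ℝ :=
  Gamma1 (fun y => Real.log (π y)) h x + lap h x

/-- Gamma two operator `Γ₂(f,f) = ½ L̃ Γ₁(f,f) − Γ₁(L̃f, f)`. -/
def Gamma2 {d : ℕ} (π f : EuclideanSpace ℝ (Fin d) → ℝ) (x : EuclideanSpace ℝ (Fin d)) : ℝ :=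
  (1/2 : ℝ) * genL π (fun y => Gamma1 f f y) x - Gamma1 (fun y => genL π f y) f x

/-- information Gamma operator `Γ_I(f,f) = −½⟨γ, ∇Γ₁(f,f)⟩ + (L̃f)·⟨∇f, γ⟩`. -/
def GammaI {d : ℕ} (π : EuclideanSpace ℝ (Fin d) → ℝ)
    (γ : EuclideanSpace ℝ (Fin d) → EuclideanSpace ℝ (Fin d))
    (f : EuclideanSpace ℝ (Fin d) → ℝ) (x : EuclideanSpace ℝ (Fin d)) : ℝ :=
  -(1/2 : ℝ) * (∑ i, γ x i * pderiv' (fun y => Gamma1 f f y) i x)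
    + genL π f x * (∑ i, pderiv' f i x * γ x i)

/-- the tensor `ℜ` of the paper:
`ℜ_{ij} = −∂²_{ij} log π + ((3−2d)/8) γ_i γ_j − (1/8) δ_{ij} Σ_k γ_k²
          + ½(γ_i ∂_j log π + γ_j ∂_i log π)`. -/
def Rtensor {d : ℕ} (π : EuclideanSpace ℝ (Fin d) → ℝ)
    (γ : EuclideanSpace ℝ (Fin d) → EuclideanSpace ℝ (Fin d))
    (i j : Fin d) (x : EuclideanSpace ℝ (Fin d)) : ℝ :=
  -pderiv2 (fun y => Real.log (π y)) i j x
    + ((3 - 2 * (d : ℝ)) / 8) * γ x i * γ x j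
    - (1/8 : ℝ) * (if i = j then ∑ k, (γ x k) ^ 2 else 0)
    + (1/2 : ℝ) * (γ x i * pderiv' (fun y => Real.log (π y)) j x
        + γ x j * pderiv' (fun y => Real.log (π y)) i x)

/-- the modified Hessian matrix `𝔥ess f`. -/
def hessM {d : ℕ} (γ : EuclideanSpace ℝ (Fin d) → EuclideanSpace ℝ (Fin d))
    (f : EuclideanSpace ℝ (Fin d) → ℝ) (i j : Fin d) (x : EuclideanSpace ℝ (Fin d)) : ℝ :=
  if i = j then
    pderiv2 f i i x + (1/2 : ℝ) * (∑ k, γ x k * pderiv' f k x)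
      - (1/2 : ℝ) * γ x i * pderiv' f i x
  else
    pderiv2 f i j x - (1/4 : ℝ) * (γ x i * pderiv' f j x + γ x j * pderiv' f i x)

/-- right-hand side of the Fokker–Planck equation `−∇·(p b) + Δp` with drift
`b = ∇ log π − γ`, evaluated at a density `p`. -/
def FPrhs {d : ℕ} (π : EuclideanSpace ℝ (Fin d) → ℝ)
    (γ : EuclideanSpace ℝ (Fin d) → EuclideanSpace ℝ (Fin d))
    (p : EuclideanSpace ℝ (Fin d) → ℝ) (x : EuclideanSpace ℝ (Fin d)) : ℝ :=
  -(∑ i, pderiv' (fun y => p y * (pderiv' (fun z => Real.log (π z)) i y - γ y i)) i x)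
    + lap p x

/-- `L̃* p = −∇·(p ∇ log π) + Δp`. -/
def Ltilstar {d : ℕ} (π p : EuclideanSpace ℝ (Fin d) → ℝ)
    (x : EuclideanSpace ℝ (Fin d)) : ℝ :=
  -(∑ i, pderiv' (fun y => p y * pderiv' (fun z => Real.log (π z)) i y) i x) + lap p x

/-- Arnold–Carlen tensor `(ℜ_AC)_{ij} = −∂²_{ij} log π − ½(∂_i γ_j + ∂_j γ_i)`. -/
def RAC {d : ℕ} (π : EuclideanSpace ℝ (Fin d) → ℝ)
    (γ : EuclideanSpace ℝ (Fin d) → EuclideanSpace ℝ (Fin d))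
    (i j : Fin d) (x : EuclideanSpace ℝ (Fin d)) : ℝ :=
  -pderiv2 (fun y => Real.log (π y)) i j x
    - (1/2 : ℝ) * (pderiv' (fun y => γ y j) i x + pderiv' (fun y => γ y i) j x)


/-!
Since `∂ᵢ(e^f) = e^f ∂ᵢf`, the integrand is `⟨∇g, πγ⟩` with `g = e^f - 1`, which is compactly
supported. The product rule gives `⟨∇g, πγ⟩ = ∇·(g πγ) - g ∇·(πγ) = ∇·(g πγ)` by stationarity,
and the integral of the divergence of a compactly supported `C¹` field vanishes.
-/

section CompactSupport

variable {E : Type*} [NormedAddCommGroup E] [NormedSpace ℝ E] [MeasurableSpace E] [BorelSpace E]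
  {μ : Measure E} {h : E → ℝ}

theorem HasCompactSupport.integrable_fderiv_apply [IsFiniteMeasureOnCompacts μ]
    (hh : ContDiff ℝ 1 h) (hc : HasCompactSupport h) (v : E) :
    Integrable (fun x => fderiv ℝ h x v) μ :=
  ((hh.continuous_fderiv one_ne_zero).clm_apply continuous_const).integrable_of_hasCompactSupport
    (hc.fderiv_apply ℝ v)

theorem HasCompactSupport.integral_fderiv_apply_eq_zero [FiniteDimensional ℝ E]
    [μ.IsAddHaarMeasure] (hh : ContDiff ℝ 1 h) (hc : HasCompactSupport h) (v : E) :
    ∫ x, fderiv ℝ h x v ∂μ = 0 := by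
  -- integration by parts against the constant function `1`
  have key := integral_mul_fderiv_eq_neg_fderiv_mul_of_integrable (μ := μ)
    (f := fun _ => (1 : ℝ)) (g := h) (v := v)
    (by simp [fderiv_fun_const]) (by simpa using hc.integrable_fderiv_apply hh v)
    (by simpa using hh.continuous.integrable_of_hasCompactSupport hc)
    (fun x _ => differentiableAt_const _) (fun x _ => hh.differentiable one_ne_zero x)
  simpa [fderiv_fun_const] using key

end CompactSupport

section Divergence

variable {d : ℕ}

theorem pderiv'_mul {g q : EuclideanSpace ℝ (Fin d) → ℝ} {x : EuclideanSpace ℝ (Fin d)}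
    (hg : DifferentiableAt ℝ g x) (hq : DifferentiableAt ℝ q x) (i : Fin d) :
    pderiv' (fun y => g y * q y) i x = pderiv' g i x * q x + g x * pderiv' q i x := by
  simp only [pderiv', fderiv_fun_mul hg hq, add_apply, smul_apply, smul_eq_mul]
  ring

theorem sum_pderiv'_mul {g : EuclideanSpace ℝ (Fin d) → ℝ}
    {q : Fin d → EuclideanSpace ℝ (Fin d) → ℝ} {x : EuclideanSpace ℝ (Fin d)}
    (hg : DifferentiableAt ℝ g x) (hq : ∀ i, DifferentiableAt ℝ (q i) x) :
    ∑ i, pderiv' (fun y => g y * q i y) i x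
      = ∑ i, pderiv' g i x * q i x + g x * ∑ i, pderiv' (q i) i x := by
  simp only [pderiv'_mul hg (hq _), Finset.sum_add_distrib, Finset.mul_sum]

theorem integral_sum_pderiv'_eq_zero {q : Fin d → EuclideanSpace ℝ (Fin d) → ℝ}
    (hq : ∀ i, ContDiff ℝ 1 (q i)) (hqc : ∀ i, HasCompactSupport (q i)) :
    ∫ x, ∑ i, pderiv' (q i) i x = 0 := by
  refine (integral_finsetSum _ fun i _ => (hqc i).integrable_fderiv_apply (hq i) _).trans ?_
  exact Finset.sum_eq_zero fun i _ => (hqc i).integral_fderiv_apply_eq_zero (hq i) _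

theorem integral_sum_pderiv'_mul_eq_zero_of_divergence_eq_zero
    {g : EuclideanSpace ℝ (Fin d) → ℝ} (hg : ContDiff ℝ 1 g) (hgc : HasCompactSupport g)
    {q : Fin d → EuclideanSpace ℝ (Fin d) → ℝ} (hq : ∀ i, ContDiff ℝ 1 (q i))
    (hdiv : ∀ x, ∑ i, pderiv' (q i) i x = 0) :
    ∫ x, ∑ i, pderiv' g i x * q i x = 0 := by
  have hsum : ∀ x, ∑ i, pderiv' g i x * q i x = ∑ i, pderiv' (fun y => g y * q i y) i x := by
    intro x
    rw [sum_pderiv'_mul (hg.differentiable one_ne_zero x)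
      (fun i => (hq i).differentiable one_ne_zero x), hdiv x, mul_zero, add_zero]
  simp_rw [hsum]
  exact integral_sum_pderiv'_eq_zero (fun i => hg.mul (hq i)) fun i => hgc.mul_right

end Divergence

theorem pderiv'_exp_comp {d : ℕ} {f : EuclideanSpace ℝ (Fin d) → ℝ}
    {x : EuclideanSpace ℝ (Fin d)} (hf : DifferentiableAt ℝ f x) (c : ℝ) (i : Fin d) :
    pderiv' (fun y => Real.exp (f y) - c) i x = Real.exp (f x) * pderiv' f i x := by
  simp only [pderiv', fderiv_sub_const, fderiv_exp hf, smul_apply, smul_eq_mul]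

theorem orthogonality_claim_general
    (d : ℕ)
    (π : EuclideanSpace ℝ (Fin d) → ℝ) (hπ : ContDiff ℝ (⊤ : ℕ∞) π)
    (γ : EuclideanSpace ℝ (Fin d) → EuclideanSpace ℝ (Fin d))
    (hγ : ContDiff ℝ (⊤ : ℕ∞) γ)
    (hstat : ∀ x, ∑ i, pderiv' (fun y => π y * γ y i) i x = 0)
    (f : EuclideanSpace ℝ (Fin d) → ℝ) (hf : ContDiff ℝ (⊤ : ℕ∞) f)
    (hfc : HasCompactSupport f) :
    ∫ x, (∑ i, pderiv' f i x * γ x i) * (π x * Real.exp (f x)) = 0 := by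
  have hf1 : ContDiff ℝ 1 f := hf.of_le (by simp)
  have hg : ContDiff ℝ 1 fun y => Real.exp (f y) - 1 :=
    (Real.contDiff_exp.comp hf1).sub contDiff_const
  have hgc : HasCompactSupport fun y => Real.exp (f y) - 1 :=
    hfc.comp_left (g := fun t => Real.exp t - 1) (by simp)
  have hq : ∀ i, ContDiff ℝ 1 fun y => π y * γ y i := fun i =>
    (hπ.of_le (by simp)).mul ((EuclideanSpace.proj i).contDiff.comp (hγ.of_le (by simp)))
  have hintegrand : ∀ x, (∑ i, pderiv' f i x * γ x i) * (π x * Real.exp (f x))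
      = ∑ i, pderiv' (fun y => Real.exp (f y) - 1) i x * (π x * γ x i) := by
    intro x
    simp only [pderiv'_exp_comp (hf1.differentiable one_ne_zero x), Finset.sum_mul]
    exact Finset.sum_congr rfl fun i _ => by ring
  simp_rw [hintegrand]
  exact integral_sum_pderiv'_mul_eq_zero_of_divergence_eq_zero hg hgc hq hstat

/-- Orthogonality claim in the proof of Corollary 2.3:
`∫ ⟨∇f, γ⟩ p dx = 0` where `p = π e^f`. -/
theorem orthogonality_claim
    (d : ℕ) (hd : 1 ≤ d)
    (π : EuclideanSpace ℝ (Fin d) → ℝ) (hπ : ContDiff ℝ (⊤ : ℕ∞) π)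
    (hπpos : ∀ x, 0 < π x)
    (γ : EuclideanSpace ℝ (Fin d) → EuclideanSpace ℝ (Fin d))
    (hγ : ContDiff ℝ (⊤ : ℕ∞) γ)
    (hstat : ∀ x, ∑ i, pderiv' (fun y => π y * γ y i) i x = 0)
    (f : EuclideanSpace ℝ (Fin d) → ℝ) (hf : ContDiff ℝ (⊤ : ℕ∞) f)
    (hfc : HasCompactSupport f) :
    ∫ x, (∑ i, pderiv' f i x * γ x i) * (π x * Real.exp (f x)) = 0 :=
  orthogonality_claim_general d π hπ γ hγ hstat f hf hfc

end
end

section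
/- Integrated information Gamma operator at the invariant measure (intermediate step in the proof of Lemma 4.1): for every smooth compactly supported Φ : ℝ^d → ℝ, ∫_{ℝ^d} Γ_I(Φ,Φ)(x) π(x) dx = ∫_{ℝ^d} L̃Φ(x) · ⟨∇Φ(x), γ(x)⟩ π(x) dx. -/
open MeasureTheory
open scoped BigOperators

noncomputable section

/-! `Γ_I(Φ,Φ) π` differs from `L̃Φ ⟨∇Φ, γ⟩ π` by `-½ ⟨π γ, ∇Γ₁(Φ,Φ)⟩`. Since `Γ₁(Φ,Φ)` is
compactly supported, integrating by parts turns the integral of this term into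
`½ ∫ (∇·(π γ)) Γ₁(Φ,Φ)`, which vanishes by stationarity. -/

section PartialDerivatives

variable {d : ℕ}

lemma contDiff_pderiv' {n : WithTop ℕ∞} {f : EuclideanSpace ℝ (Fin d) → ℝ}
    (hf : ContDiff ℝ (n + 1) f) (i : Fin d) : ContDiff ℝ n (pderiv' f i) :=
  (hf.fderiv_right le_rfl).clm_apply contDiff_const

lemma continuous_pderiv' {f : EuclideanSpace ℝ (Fin d) → ℝ} (hf : ContDiff ℝ 1 f) (i : Fin d) :
    Continuous (pderiv' f i) :=
  (hf.continuous_fderiv one_ne_zero).clm_apply continuous_const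

lemma HasCompactSupport.pderiv' {f : EuclideanSpace ℝ (Fin d) → ℝ}
    (hf : HasCompactSupport f) (i : Fin d) : HasCompactSupport (pderiv' f i) :=
  hf.fderiv_apply ℝ (EuclideanSpace.single i 1)

lemma contDiff_gamma1 {n : WithTop ℕ∞} {g h : EuclideanSpace ℝ (Fin d) → ℝ}
    (hg : ContDiff ℝ (n + 1) g) (hh : ContDiff ℝ (n + 1) h) : ContDiff ℝ n (Gamma1 g h) :=
  ContDiff.sum fun i _ => (contDiff_pderiv' hg i).mul (contDiff_pderiv' hh i)

lemma HasCompactSupport.gamma1 {g : EuclideanSpace ℝ (Fin d) → ℝ}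
    (hg : HasCompactSupport g) (h : EuclideanSpace ℝ (Fin d) → ℝ) :
    HasCompactSupport (Gamma1 g h) := by
  refine (hg.fderiv ℝ).mono' fun x hx => subset_tsupport _ ?_
  contrapose hx
  simp [Gamma1, _root_.pderiv', Function.notMem_support.mp hx]

lemma integrable_mul_pderiv' {f g : EuclideanSpace ℝ (Fin d) → ℝ} (hf : Continuous f)
    (hg : ContDiff ℝ 1 g) (hgc : HasCompactSupport g) (i : Fin d) :
    Integrable fun x => f x * pderiv' g i x :=
  (hf.mul (continuous_pderiv' hg i)).integrable_of_hasCompactSupport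
    (hgc.pderiv' i).mul_left

lemma integral_mul_pderiv'_eq_neg_pderiv'_mul {f g : EuclideanSpace ℝ (Fin d) → ℝ}
    (hf : ContDiff ℝ 1 f) (hg : ContDiff ℝ 1 g) (hgc : HasCompactSupport g) (i : Fin d) :
    ∫ x, f x * pderiv' g i x = -∫ x, pderiv' f i x * g x := by
  have hf'g : Integrable fun x => pderiv' f i x * g x :=
    ((continuous_pderiv' hf i).mul hg.continuous).integrable_of_hasCompactSupport
      hgc.mul_left
  have hfg : Integrable fun x => f x * g x :=
    (hf.continuous.mul hg.continuous).integrable_of_hasCompactSupport hgc.mul_left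
  exact integral_mul_fderiv_eq_neg_fderiv_mul_of_integrable hf'g
    (integrable_mul_pderiv' hf.continuous hg hgc i) hfg
    (fun x _ => hf.differentiable one_ne_zero x) (fun x _ => hg.differentiable one_ne_zero x)

lemma integral_sum_mul_pderiv'_eq_zero_of_div_eq_zero
    {V : Fin d → EuclideanSpace ℝ (Fin d) → ℝ} (hV : ∀ i, ContDiff ℝ 1 (V i))
    (hdiv : ∀ x, ∑ i, pderiv' (V i) i x = 0)
    {G : EuclideanSpace ℝ (Fin d) → ℝ} (hG : ContDiff ℝ 1 G) (hGc : HasCompactSupport G) :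
    ∫ x, ∑ i, V i x * pderiv' G i x = 0 := by
  have hdivG : ∀ i ∈ Finset.univ, Integrable fun x => pderiv' (V i) i x * G x := fun i _ =>
    ((continuous_pderiv' (hV i) i).mul hG.continuous).integrable_of_hasCompactSupport
      hGc.mul_left
  calc ∫ x, ∑ i, V i x * pderiv' G i x
      = ∑ i, ∫ x, V i x * pderiv' G i x :=
        integral_finsetSum _ fun i _ => integrable_mul_pderiv' (hV i).continuous hG hGc i
    _ = -∫ x, (∑ i, pderiv' (V i) i x) * G x := by
        simp_rw [integral_mul_pderiv'_eq_neg_pderiv'_mul (hV _) hG hGc, Finset.sum_mul,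
          integral_finsetSum _ hdivG, Finset.sum_neg_distrib]
    _ = 0 := by simp [hdiv]

end PartialDerivatives

lemma integral_add_eq_left_of_integral_eq_zero {α E : Type*} [MeasurableSpace α] {μ : Measure α}
    [NormedAddCommGroup E] [NormedSpace ℝ E] {f g : α → E} (hg : Integrable g μ)
    (hg0 : ∫ x, g x ∂μ = 0) : ∫ x, (f x + g x) ∂μ = ∫ x, f x ∂μ := by
  by_cases hf : Integrable f μ
  · rw [integral_add hf hg, hg0, add_zero]
  · have hfg : ¬Integrable (fun x => f x + g x) μ :=
      (integrable_add_iff_integrable_left' hg).not.mpr hf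
    rw [integral_undef hf, integral_undef hfg]

theorem integrated_gamma_I_identity_general
    (d : ℕ)
    (π : EuclideanSpace ℝ (Fin d) → ℝ) (hπ : ContDiff ℝ (⊤ : ℕ∞) π)
    (γ : EuclideanSpace ℝ (Fin d) → EuclideanSpace ℝ (Fin d))
    (hγ : ContDiff ℝ (⊤ : ℕ∞) γ)
    (hstat : ∀ x, ∑ i, pderiv' (fun y => π y * γ y i) i x = 0)
    (Φ : EuclideanSpace ℝ (Fin d) → ℝ) (hΦ : ContDiff ℝ (⊤ : ℕ∞) Φ)
    (hΦc : HasCompactSupport Φ) :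
    ∫ x, GammaI π γ Φ x * π x =
      ∫ x, genL π Φ x * (∑ i, pderiv' Φ i x * γ x i) * π x := by
  have hΦ2 : ContDiff ℝ (1 + 1) Φ := hΦ.of_le (WithTop.coe_le_coe.mpr le_top)
  have hG : ContDiff ℝ 1 (Gamma1 Φ Φ) := contDiff_gamma1 hΦ2 hΦ2
  have hπγ : ∀ i, ContDiff ℝ 1 fun y => π y * γ y i := fun i =>
    (hπ.mul ((EuclideanSpace.proj i).contDiff.comp hγ)).of_le (WithTop.coe_le_coe.mpr le_top)
  have hsplit : ∀ x, GammaI π γ Φ x * π x = genL π Φ x * (∑ i, pderiv' Φ i x * γ x i) * π x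
      + -(1 / 2 : ℝ) * ∑ i, π x * γ x i * pderiv' (Gamma1 Φ Φ) i x := fun x => by
    simp only [GammaI, mul_assoc (π x), ← Finset.mul_sum]
    ring
  simp_rw [hsplit]
  refine integral_add_eq_left_of_integral_eq_zero ?_ ?_
  · exact (integrable_finsetSum _ fun i _ =>
      integrable_mul_pderiv' (hπγ i).continuous hG (hΦc.gamma1 Φ) i).const_mul _
  · rw [integral_const_mul, integral_sum_mul_pderiv'_eq_zero_of_div_eq_zero hπγ hstat hG
      (hΦc.gamma1 Φ), mul_zero]

/-- Intermediate step in the proof of Lemma 4.1: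
`∫ Γ_I(Φ,Φ) π = ∫ L̃Φ ⟨∇Φ, γ⟩ π`. -/
theorem integrated_gamma_I_identity
    (d : ℕ) (hd : 1 ≤ d)
    (π : EuclideanSpace ℝ (Fin d) → ℝ) (hπ : ContDiff ℝ (⊤ : ℕ∞) π)
    (hπpos : ∀ x, 0 < π x)
    (γ : EuclideanSpace ℝ (Fin d) → EuclideanSpace ℝ (Fin d))
    (hγ : ContDiff ℝ (⊤ : ℕ∞) γ)
    (hstat : ∀ x, ∑ i, pderiv' (fun y => π y * γ y i) i x = 0)
    (Φ : EuclideanSpace ℝ (Fin d) → ℝ) (hΦ : ContDiff ℝ (⊤ : ℕ∞) Φ)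
    (hΦc : HasCompactSupport Φ) :
    ∫ x, GammaI π γ Φ x * π x =
      ∫ x, genL π Φ x * (∑ i, pderiv' Φ i x * γ x i) * π x :=
  integrated_gamma_I_identity_general d π hπ γ hγ hstat Φ hΦ hΦc

end
end
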